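/- arXiv:2007.04677 — 2 statements merged into one kernel-verified Lean document; each statement's English description precedes it below -/
import Mathlib

section
/- Let s, p, σ² > 0, γ_j, γ_k, ζ_j, ζ_k > 0, and C ≥ γ_j σ². Then ∫_{γ_j σ²}^{C} ( ∫_{x/(γ_j ζ_k) − σ²/ζ_k}^{γ_k (x ζ_j + σ²)} (1/p)·exp(−y/p) dy ) (1/s)·exp(−x/s) dx = ( γ_j ζ_k p / (s + γ_j ζ_k p) )·( exp(−γ_j σ²/s) − exp( −C (s + γ_j ζ_k p)/(γ_j ζ_k p s) + σ²/(ζ_k p) ) ) − ( p / (p + γ_k ζ_j s) )·( exp(−γ_j σ²/s)·exp( −γ_k σ² (1 + γ_j ζ_j)/p ) − exp( −C (γ_k ζ_j s + p)/(p s) − γ_k σ²/p ) ), where the inner integral is understood as the signed integral exp(−a(x)/p) − exp(−b(x)/p) with a(x) = x/(γ_j ζ_k) − σ²/ζ_k and b(x) = γ_k (x ζ_j + σ²). -/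
set_option maxHeartbeats 2000000

lemma exp_lin_integral (c d a b : ℝ) (hc : c ≠ 0) :
    ∫ x in a..b, Real.exp (c * x + d)
      = (Real.exp (c * b + d) - Real.exp (c * a + d)) / c := by
  have h : ∀ x ∈ Set.uIcc a b, HasDerivAt (fun x => Real.exp (c * x + d) / c)
      (Real.exp (c * x + d)) x := by
    intro x _
    have h1 : HasDerivAt (fun x : ℝ => c * x + d) c x := by
      simpa using ((hasDerivAt_id x).const_mul c).add_const d
    have h2 := (h1.exp).div_const c
    simpa [mul_div_assoc, mul_div_cancel_right₀ _ hc] using h2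
  rw [intervalIntegral.integral_eq_sub_of_hasDerivAt h
    ((by continuity : Continuous fun x => Real.exp (c*x+d)).intervalIntegrable a b)]
  ring

/-- Equation (35) of the paper: the iterated integral over `x ∈ [γ_j σ², C]` of
the inner signed integral `∫_{a(x)}^{b(x)} (1/p)e^{−y/p} dy` (with
`a(x) = x/(γ_j ζ_k) − σ²/ζ_k`, `b(x) = γ_k(x ζ_j + σ²)`, understood as
`e^{−a(x)/p} − e^{−b(x)/p}`) against the density `(1/s)e^{−x/s}`
evaluates in closed form. -/
theorem noma_both_fail_integral (s p σ2 γj γk ζj ζk C : ℝ)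
    (hs : 0 < s) (hp : 0 < p) (hσ : 0 < σ2)
    (hγj : 0 < γj) (hγk : 0 < γk) (hζj : 0 < ζj) (hζk : 0 < ζk)
    (hC : γj * σ2 ≤ C) :
    (∫ x in (γj * σ2)..C,
        (Real.exp (-(x / (γj * ζk) - σ2 / ζk) / p)
          - Real.exp (-(γk * (x * ζj + σ2)) / p))
          * ((1 / s) * Real.exp (-x / s)))
      = (γj * ζk * p / (s + γj * ζk * p))
          * (Real.exp (-(γj * σ2) / s)
            - Real.exp (-C * ((s + γj * ζk * p) / (γj * ζk * p * s)) + σ2 / (ζk * p)))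
        - (p / (p + γk * ζj * s))
          * (Real.exp (-(γj * σ2) / s) * Real.exp (-(γk * σ2) * (1 + γj * ζj) / p)
            - Real.exp (-C * ((γk * ζj * s + p) / (p * s)) - γk * σ2 / p)) := by
  set A : ℝ := -(1 / (γj * ζk * p) + 1 / s) with hA
  set B : ℝ := σ2 / (ζk * p) with hB
  set G : ℝ := -(γk * ζj / p + 1 / s) with hG
  set D : ℝ := -(γk * σ2) / p with hD
  have hApos : 0 < 1 / (γj * ζk * p) + 1 / s := by positivity
  have hGpos : 0 < γk * ζj / p + 1 / s := by positivity
  have hAne : A ≠ 0 := by rw [hA]; exact neg_ne_zero.mpr (ne_of_gt hApos)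
  have hGne : G ≠ 0 := by rw [hG]; exact neg_ne_zero.mpr (ne_of_gt hGpos)
  have hfun : ∀ x : ℝ, (Real.exp (-(x / (γj * ζk) - σ2 / ζk) / p)
          - Real.exp (-(γk * (x * ζj + σ2)) / p))
          * ((1 / s) * Real.exp (-x / s))
      = (1/s) * Real.exp (A * x + B) - (1/s) * Real.exp (G * x + D) := by
    intro x
    have e1 : Real.exp (-(x / (γj * ζk) - σ2 / ζk) / p) * Real.exp (-x / s)
        = Real.exp (A * x + B) := by
      rw [← Real.exp_add]; congr 1; rw [hA, hB]; field_simp; ring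
    have e2 : Real.exp (-(γk * (x * ζj + σ2)) / p) * Real.exp (-x / s)
        = Real.exp (G * x + D) := by
      rw [← Real.exp_add]; congr 1; rw [hG, hD]; field_simp; ring
    rw [← e1, ← e2]; ring
  rw [intervalIntegral.integral_congr (fun x _ => hfun x)]
  rw [intervalIntegral.integral_sub
      (((by continuity : Continuous fun x => (1/s) * Real.exp (A*x+B))).intervalIntegrable _ _)
      (((by continuity : Continuous fun x => (1/s) * Real.exp (G*x+D))).intervalIntegrable _ _),
    intervalIntegral.integral_const_mul, intervalIntegral.integral_const_mul,
    exp_lin_integral A B _ _ hAne, exp_lin_integral G D _ _ hGne]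
  -- now pure algebra in exp values
  have hargA1 : A * (γj * σ2) + B = -(γj * σ2) / s := by
    rw [hA, hB]; field_simp; ring
  have hargA2 : A * C + B = -C * ((s + γj * ζk * p) / (γj * ζk * p * s)) + σ2 / (ζk * p) := by
    rw [hA, hB]; field_simp
  have hargG1 : G * (γj * σ2) + D = -(γj * σ2) / s + -(γk * σ2) * (1 + γj * ζj) / p := by
    rw [hG, hD]; field_simp; ring
  have hargG2 : G * C + D = -C * ((γk * ζj * s + p) / (p * s)) - γk * σ2 / p := by
    rw [hG, hD]; field_simp; ring
  rw [hargA1, hargA2, hargG1, hargG2, ← Real.exp_add]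
  generalize Real.exp (-(γj * σ2) / s) = E1
  generalize Real.exp (-C * ((s + γj * ζk * p) / (γj * ζk * p * s)) + σ2 / (ζk * p)) = E2
  generalize Real.exp (-(γj * σ2) / s + -(γk * σ2) * (1 + γj * ζj) / p) = E3
  generalize Real.exp (-C * ((γk * ζj * s + p) / (p * s)) - γk * σ2 / p) = E4
  have h1 : s + γj * ζk * p ≠ 0 := by positivity
  have h2 : p + γk * ζj * s ≠ 0 := by positivity
  have hAinv : A⁻¹ = -(γj * ζk * p * s) / (s + γj * ζk * p) := by
    refine inv_eq_of_mul_eq_one_right ?_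
    rw [hA]
    field_simp
  have hGinv : G⁻¹ = -(p * s) / (p + γk * ζj * s) := by
    refine inv_eq_of_mul_eq_one_right ?_
    rw [hG]
    field_simp
    ring
  simp only [div_eq_mul_inv]
  rw [hAinv, hGinv]
  field_simp
  ring
end

section
/- Let X and Y be independent exponentially distributed random variables with means s > 0 and p > 0, and let γ_j, γ_k, ζ_j, ζ_k, σ² > 0. Set S_j = s/γ_j, S_k = p/γ_k, φ_j = γ_j ζ_j, φ_k = γ_k ζ_k, and define p_er = Pr{ X/σ² < γ_j and Y/(X ζ_j + σ²) > γ_k } + Pr{ X/(Y ζ_k + σ²) < γ_j and Y/(X ζ_j + σ²) < γ_k }. If φ_j φ_k ≥ 1, then p_er = 1 − ( S_j/(S_k φ_k + S_j) + ( S_k/(S_j φ_j + S_k) )·exp( −σ² (φ_j + 1)/S_k ) )·exp( −σ²/S_j ). -/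
/-!
Condition on `X = x` and write `a = γj σ²`. For `x < a` user `j` fails for almost every `Y`: the
two events split the half-line at `Y = γk (x ζj + σ²)`. For `x ≥ a` it fails exactly when `Y` lies
in the strip `(x - a) / (γj ζk) < Y < γk (x ζj + σ²)`, which is nonempty because `φj φk ≥ 1` makes
the lower boundary the flatter line. Both boundaries are affine in `x`, so integrating the
exponential tails of `Y` against the density of `X` over `x ≥ a` produces two Laplace-type terms
`r / (r + λ) · e^{-(r + λ) a - c}`, and `P(X < a) = 1 - e^{-a / s}` accounts for the rest.
-/

open MeasureTheory ProbabilityTheory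

open Real Set

namespace ProbabilityTheory

variable {r : ℝ}

lemma expMeasure_eq_withDensity (r : ℝ) :
    expMeasure r = volume.withDensity (exponentialPDF r) :=
  rfl

instance (r : ℝ) : NullSingletonClass (expMeasure r) :=
  inferInstanceAs (NullSingletonClass (volume.withDensity (exponentialPDF r)))

lemma ae_nonneg_expMeasure (r : ℝ) : ∀ᵐ x ∂expMeasure r, 0 ≤ x := by
  refine ae_iff.2 ?_
  simp only [not_le]
  change expMeasure r (Iio 0) = 0
  rw [expMeasure_eq_withDensity, withDensity_apply _ measurableSet_Iio]
  exact lintegral_exponentialPDF_of_nonpos le_rfl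

lemma expMeasure_Ioi (hr : 0 < r) {t : ℝ} (ht : 0 ≤ t) :
    expMeasure r (Ioi t) = ENNReal.ofReal (exp (-(r * t))) := by
  have := isProbabilityMeasure_expMeasure hr
  rw [← compl_Iic, prob_compl_eq_one_sub measurableSet_Iic, ← ofReal_cdf, cdf_expMeasure_eq hr,
    if_pos ht, ← ENNReal.ofReal_one,
    ← ENNReal.ofReal_sub _ (sub_nonneg.2 (exp_le_one_iff.2 (by nlinarith))), sub_sub_cancel]

lemma expMeasure_Iio (hr : 0 < r) {t : ℝ} (ht : 0 ≤ t) :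
    expMeasure r (Iio t) = ENNReal.ofReal (1 - exp (-(r * t))) := by
  have := isProbabilityMeasure_expMeasure hr
  rw [measure_congr Iio_ae_eq_Iic, ← ofReal_cdf, cdf_expMeasure_eq hr, if_pos ht]

/-- `P(X ≥ a, Y > α X + β)` for independent `X ~ Exp(r)` and `Y ~ Exp(q)`. -/
lemma setLIntegral_Ici_expMeasure_Ioi {q α β a : ℝ} (hr : 0 < r) (hq : 0 < q) (ha : 0 ≤ a)
    (hα : 0 ≤ α) (hβ : 0 ≤ α * a + β) :
    ∫⁻ x in Ici a, expMeasure q (Ioi (α * x + β)) ∂expMeasure r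
      = ENNReal.ofReal (r / (r + q * α) * exp (-(r * a + q * (α * a + β)))) := by
  have hrq : 0 < r + q * α := by positivity
  have := isProbabilityMeasure_expMeasure hrq
  have hpdf : ∀ r, Measurable (exponentialPDF r) :=
    fun r => (measurable_exponentialPDFReal r).ennreal_ofReal
  -- the tail of `Y` turns the density of `Exp(r)` into a multiple of that of `Exp(r + q α)`
  have hdens : ∀ x ∈ Ici a, exponentialPDF r x * expMeasure q (Ioi (α * x + β))
      = ENNReal.ofReal (r / (r + q * α) * exp (-(q * β))) * exponentialPDF (r + q * α) x := by
    intro x hx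
    have hx0 : 0 ≤ x := ha.trans hx
    rw [expMeasure_Ioi hq (by nlinarith [mem_Ici.1 hx]), exponentialPDF_of_nonneg hx0,
      exponentialPDF_of_nonneg hx0, ← ENNReal.ofReal_mul (by positivity),
      ← ENNReal.ofReal_mul (by positivity)]
    congr 1
    rw [mul_mul_mul_comm, div_mul_cancel₀ _ hrq.ne', mul_assoc, ← exp_add, ← exp_add]
    ring_nf
  rw [expMeasure_eq_withDensity r, setLIntegral_withDensity_eq_setLIntegral_mul_non_measurable _
      (hpdf r) _ measurableSet_Ici (ae_of_all _ fun _ => ENNReal.ofReal_lt_top)]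
  simp only [Pi.mul_apply]
  rw [setLIntegral_congr_fun measurableSet_Ici hdens, lintegral_const_mul _ (hpdf _),
    ← withDensity_apply _ measurableSet_Ici, ← expMeasure_eq_withDensity,
    ← measure_congr Ioi_ae_eq_Ici, expMeasure_Ioi hrq ha, ← ENNReal.ofReal_mul (by positivity),
    mul_assoc, ← exp_add]
  ring_nf

end ProbabilityTheory

lemma measure_preimage_prodMk_eq_prod {Ω α β : Type*} [MeasurableSpace Ω] [MeasurableSpace α]
    [MeasurableSpace β] {μ : Measure Ω} [IsFiniteMeasure μ] {X : Ω → α} {Y : Ω → β}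
    (hX : Measurable X) (hY : Measurable Y) (hXY : IndepFun X Y μ) {E : Set (α × β)}
    (hE : MeasurableSet E) :
    μ ((fun ω => (X ω, Y ω)) ⁻¹' E) = ((μ.map X).prod (μ.map Y)) E := by
  rw [← Measure.map_apply (hX.prodMk hY) hE,
    (indepFun_iff_map_prod_eq_prod_map_map hX.aemeasurable hY.aemeasurable).1 hXY]

namespace Noma

def failureSet (γj γk ζj ζk σ2 : ℝ) : Set (ℝ × ℝ) :=
  {q | q.1 / σ2 < γj ∧ q.2 / (q.1 * ζj + σ2) > γk ∨
    q.1 / (q.2 * ζk + σ2) < γj ∧ q.2 / (q.1 * ζj + σ2) < γk}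

variable {γj γk ζj ζk σ2 : ℝ}

lemma measurableSet_failureSet (γj γk ζj ζk σ2 : ℝ) :
    MeasurableSet (failureSet γj γk ζj ζk σ2) := by
  unfold failureSet
  measurability

lemma mk_mem_failureSet_iff {x y : ℝ} (hx : 0 ≤ x) (hy : 0 ≤ y) (hγj : 0 < γj) (hζj : 0 ≤ ζj)
    (hζk : 0 < ζk) (hσ : 0 < σ2) :
    (x, y) ∈ failureSet γj γk ζj ζk σ2 ↔
      (x < γj * σ2 ∧ y ≠ γk * ζj * x + γk * σ2) ∨
        ((x - γj * σ2) / (γj * ζk) < y ∧ y < γk * ζj * x + γk * σ2) := by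
  have hdx : 0 < x * ζj + σ2 := by positivity
  have hdy : 0 < y * ζk + σ2 := by positivity
  have hc : 0 < γj * ζk := by positivity
  have hℓ₁ : γk * (x * ζj + σ2) = γk * ζj * x + γk * σ2 := by ring
  have hℓ₂ : x / (y * ζk + σ2) < γj ↔ (x - γj * σ2) / (γj * ζk) < y := by
    rw [div_lt_iff₀ hdy, div_lt_iff₀ hc]
    constructor <;> intro h <;> nlinarith
  have hneg : x < γj * σ2 → (x - γj * σ2) / (γj * ζk) < y := fun h =>
    (div_neg_of_neg_of_pos (by linarith) hc).trans_le hy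
  simp only [failureSet, mem_ofPred_eq, gt_iff_lt, div_lt_iff₀ hσ, lt_div_iff₀ hdx,
    div_lt_iff₀ hdx, hℓ₂, hℓ₁]
  constructor
  · rintro (⟨hxa, hy₁⟩ | h)
    exacts [Or.inl ⟨hxa, hy₁.ne'⟩, Or.inr h]
  · rintro (⟨hxa, hne⟩ | h)
    · rcases hne.lt_or_gt with hlt | hgt
      exacts [Or.inr ⟨hneg hxa, hlt⟩, Or.inl ⟨hxa, hgt⟩]
    · exact Or.inr h

variable {ρ : Measure ℝ} [NullSingletonClass ρ]

lemma measure_fiber_failureSet_of_lt [IsProbabilityMeasure ρ] (hρ : ∀ᵐ y ∂ρ, 0 ≤ y) {x : ℝ}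
    (hx : 0 ≤ x) (hxa : x < γj * σ2) (hγj : 0 < γj) (hζj : 0 ≤ ζj) (hζk : 0 < ζk)
    (hσ : 0 < σ2) :
    ρ (Prod.mk x ⁻¹' failureSet γj γk ζj ζk σ2) = 1 := by
  have hfiber : Prod.mk x ⁻¹' failureSet γj γk ζj ζk σ2
      =ᵐ[ρ] ({γk * ζj * x + γk * σ2}ᶜ : Set ℝ) := by
    refine Filter.eventuallyEq_set.2 ?_
    filter_upwards [hρ] with y hy
    rw [mem_preimage, mk_mem_failureSet_iff hx hy hγj hζj hζk hσ]
    exact ⟨fun h => h.elim (·.2) (·.2.ne), fun h => Or.inl ⟨hxa, h⟩⟩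
  rw [measure_congr hfiber, prob_compl_eq_one_sub (measurableSet_singleton _), measure_singleton,
    tsub_zero]

lemma measure_fiber_failureSet_add_of_le (hρ : ∀ᵐ y ∂ρ, 0 ≤ y) {x : ℝ} (hxa : γj * σ2 ≤ x)
    (hγj : 0 < γj) (hγk : 0 < γk) (hζj : 0 ≤ ζj) (hζk : 0 < ζk) (hσ : 0 < σ2)
    (hcase : 1 ≤ γj * ζj * (γk * ζk)) :
    ρ (Prod.mk x ⁻¹' failureSet γj γk ζj ζk σ2) + ρ (Ioi (γk * ζj * x + γk * σ2))
      = ρ (Ioi ((x - γj * σ2) / (γj * ζk))) := by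
  have hx : 0 ≤ x := (by positivity : 0 ≤ γj * σ2).trans hxa
  have hfiber : Prod.mk x ⁻¹' failureSet γj γk ζj ζk σ2
      =ᵐ[ρ] Ioo ((x - γj * σ2) / (γj * ζk)) (γk * ζj * x + γk * σ2) := by
    refine Filter.eventuallyEq_set.2 ?_
    filter_upwards [hρ] with y hy
    rw [mem_preimage, mk_mem_failureSet_iff hx hy hγj hζj hζk hσ]
    simp [hxa.not_gt]
  have hlines : (x - γj * σ2) / (γj * ζk) < γk * ζj * x + γk * σ2 := by
    rw [div_lt_iff₀ (by positivity)]
    nlinarith [mul_nonneg hx (sub_nonneg.2 hcase), mul_pos (mul_pos hγj hζk) (mul_pos hγk hσ)]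
  rw [measure_congr hfiber, measure_congr Ioi_ae_eq_Ici,
    ← measure_union ((Iio_disjoint_Ici le_rfl).mono_left Ioo_subset_Iio_self) measurableSet_Ici,
    Ioo_union_Ici_eq_Ioi hlines]

lemma setLIntegral_Ici_fiber_failureSet_add {r q : ℝ} (hr : 0 < r) (hq : 0 < q) (hγj : 0 < γj)
    (hγk : 0 < γk) (hζj : 0 ≤ ζj) (hζk : 0 < ζk) (hσ : 0 < σ2)
    (hcase : 1 ≤ γj * ζj * (γk * ζk)) :
    ∫⁻ x in Ici (γj * σ2), expMeasure q (Prod.mk x ⁻¹' failureSet γj γk ζj ζk σ2) ∂expMeasure r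
      + ENNReal.ofReal (r / (r + q * (γk * ζj))
          * exp (-(r * (γj * σ2) + q * (γk * ζj * (γj * σ2) + γk * σ2))))
      = ENNReal.ofReal (r / (r + q * (γj * ζk)⁻¹) * exp (-(r * (γj * σ2)))) := by
  have := isProbabilityMeasure_expMeasure hq
  have ha : 0 < γj * σ2 := by positivity
  have h₁ := setLIntegral_Ici_expMeasure_Ioi (α := γk * ζj) (β := γk * σ2) hr hq ha.le
    (by positivity) (by positivity)
  have h₂ : ∫⁻ x in Ici (γj * σ2), expMeasure q (Ioi ((x - γj * σ2) / (γj * ζk))) ∂expMeasure r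
      = ENNReal.ofReal (r / (r + q * (γj * ζk)⁻¹) * exp (-(r * (γj * σ2)))) := by
    have hℓ₂ : ∀ x, (x - γj * σ2) / (γj * ζk) = (γj * ζk)⁻¹ * x + -(σ2 / ζk) := fun x => by
      field_simp
      ring
    have hroot : (γj * ζk)⁻¹ * (γj * σ2) + -(σ2 / ζk) = 0 := by
      field_simp
      ring
    simp only [hℓ₂]
    rw [setLIntegral_Ici_expMeasure_Ioi hr hq ha.le (by positivity) hroot.ge, hroot, mul_zero,
      add_zero]
  rw [← h₁, ← h₂,
    ← lintegral_add_left (measurable_measure_prodMk_left (measurableSet_failureSet _ _ _ _ _))]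
  exact setLIntegral_congr_fun measurableSet_Ici fun x hx => measure_fiber_failureSet_add_of_le
    (ae_nonneg_expMeasure q) hx hγj hγk hζj hζk hσ hcase

theorem toReal_prod_failureSet {r q : ℝ} (hr : 0 < r) (hq : 0 < q) (hγj : 0 < γj) (hγk : 0 < γk)
    (hζj : 0 ≤ ζj) (hζk : 0 < ζk) (hσ : 0 < σ2) (hcase : 1 ≤ γj * ζj * (γk * ζk)) :
    (((expMeasure r).prod (expMeasure q)) (failureSet γj γk ζj ζk σ2)).toReal
      = 1 - exp (-(r * (γj * σ2))) + r / (r + q * (γj * ζk)⁻¹) * exp (-(r * (γj * σ2)))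
        - r / (r + q * (γk * ζj))
          * exp (-(r * (γj * σ2) + q * (γk * ζj * (γj * σ2) + γk * σ2))) := by
  have := isProbabilityMeasure_expMeasure hr
  have := isProbabilityMeasure_expMeasure hq
  have ha : 0 < γj * σ2 := by positivity
  set fiber := fun x => expMeasure q (Prod.mk x ⁻¹' failureSet γj γk ζj ζk σ2)
  have hlow : ∫⁻ x in Iio (γj * σ2), fiber x ∂expMeasure r
      = ENNReal.ofReal (1 - exp (-(r * (γj * σ2)))) := by
    rw [setLIntegral_congr_fun_ae measurableSet_Iio (g := fun _ => 1), setLIntegral_one,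
      expMeasure_Iio hr ha.le]
    filter_upwards [ae_nonneg_expMeasure r] with x hx hxa
    exact measure_fiber_failureSet_of_lt (ae_nonneg_expMeasure q) hx hxa hγj hζj hζk hσ
  have hhigh := setLIntegral_Ici_fiber_failureSet_add hr hq hγj hγk hζj hζk hσ hcase
  rw [Measure.prod_apply (measurableSet_failureSet _ _ _ _ _),
    ← lintegral_add_compl fiber measurableSet_Iio, compl_Iio, hlow]
  have hI : ∫⁻ x in Ici (γj * σ2), fiber x ∂expMeasure r ≠ ⊤ :=
    ne_top_of_le_ne_top ENNReal.ofReal_ne_top (hhigh ▸ le_self_add)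
  have hreal := congrArg ENNReal.toReal hhigh
  rw [ENNReal.toReal_add hI ENNReal.ofReal_ne_top, ENNReal.toReal_ofReal (by positivity),
    ENNReal.toReal_ofReal (by positivity)] at hreal
  rw [ENNReal.toReal_add ENNReal.ofReal_ne_top hI,
    ENNReal.toReal_ofReal (sub_nonneg.2 (exp_le_one_iff.2 (by nlinarith)))]
  linarith

end Noma

/-- Closed-form two-user NOMA error probability (case `φ_j φ_k ≥ 1`): with `X, Y`
independent exponential received powers with means `s, p`, the failure
probability of user `j` under optimal SIC ordering equals
`1 − (S_j/(S_k φ_k + S_j) + (S_k/(S_j φ_j + S_k))e^{−σ²(φ_j+1)/S_k})e^{−σ²/S_j}`. -/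
theorem noma_error_closed_form_geq_one
    {Ω : Type*} [MeasurableSpace Ω] (μ : Measure Ω) [IsProbabilityMeasure μ]
    (X Y : Ω → ℝ) (hXm : Measurable X) (hYm : Measurable Y)
    (hXY : IndepFun X Y μ)
    (s p γj γk ζj ζk σ2 : ℝ)
    (hs : 0 < s) (hp : 0 < p)
    (hγj : 0 < γj) (hγk : 0 < γk) (hζj : 0 < ζj) (hζk : 0 < ζk) (hσ : 0 < σ2)
    (hX : μ.map X = expMeasure (1 / s)) (hY : μ.map Y = expMeasure (1 / p))
    (Sj Sk φj φk : ℝ)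
    (hSj : Sj = s / γj) (hSk : Sk = p / γk)
    (hφj : φj = γj * ζj) (hφk : φk = γk * ζk)
    (hcase : 1 ≤ φj * φk) :
    (μ {ω | X ω / σ2 < γj ∧ Y ω / (X ω * ζj + σ2) > γk}).toReal
      + (μ {ω | X ω / (Y ω * ζk + σ2) < γj ∧ Y ω / (X ω * ζj + σ2) < γk}).toReal
      = 1 - (Sj / (Sk * φk + Sj)
          + (Sk / (Sj * φj + Sk)) * Real.exp (-σ2 * (φj + 1) / Sk))
          * Real.exp (-σ2 / Sj) := by
  subst hSj hSk hφj hφk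
  have hdisj : Disjoint {ω | X ω / σ2 < γj ∧ Y ω / (X ω * ζj + σ2) > γk}
      {ω | X ω / (Y ω * ζk + σ2) < γj ∧ Y ω / (X ω * ζj + σ2) < γk} :=
    disjoint_left.2 fun _ h₁ h₂ => lt_asymm h₁.2 h₂.2
  have hB : MeasurableSet {ω | X ω / (Y ω * ζk + σ2) < γj ∧ Y ω / (X ω * ζj + σ2) < γk} := by
    measurability
  rw [← ENNReal.toReal_add (measure_ne_top _ _) (measure_ne_top _ _), ← measure_union hdisj hB]
  change (μ ((fun ω => (X ω, Y ω)) ⁻¹' Noma.failureSet γj γk ζj ζk σ2)).toReal = _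
  rw [measure_preimage_prodMk_eq_prod hXm hYm hXY (Noma.measurableSet_failureSet _ _ _ _ _), hX,
    hY, Noma.toReal_prod_failureSet (by positivity) (by positivity) hγj hγk hζj.le hζk hσ hcase]
  have e₁ : exp (-(1 / s * (γj * σ2))) = exp (-σ2 / (s / γj)) := by
    congr 1
    field_simp
  have e₂ : exp (-(1 / s * (γj * σ2) + 1 / p * (γk * ζj * (γj * σ2) + γk * σ2)))
      = exp (-σ2 * (γj * ζj + 1) / (p / γk)) * exp (-σ2 / (s / γj)) := by
    rw [← exp_add]
    congr 1
    field_simp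
    ring
  rw [e₁, e₂]
  field_simp
  ring
end
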